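/- Let ψ be the characteristic exponent of a Lévy process and let R ≤ R' with ∫_{|x|>1}(e^{-Rx}+e^{-R'x}) ν(dx) < ∞. Then there exist constants C₁ ∈ ℝ and C₂ > 0 such that for all complex u with Im u ∈ [R,R']: Re ψ(u) ≤ C₁ + C₂ Re ψ(Re u). -/

import Mathlib

/-!
Write `u = t + i b` with `b ∈ [R, R']`. The Gaussian and drift parts of `Re ψ(u)` exceed half of
those of `Re ψ(t)` by at most `a² b² / 2 + |γ b|`. In the jump part put `y = -b x`, `c = cos (t x)`;
the real part of the integrand is `e^y c - 1 - y = (e^y - 1 - y) c - y (1 - c) + (c - 1)`.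
For `|x| ≤ 1` the first term is `O(x²)` and AM-GM gives `-y (1 - c) ≤ y² + (1 - c) / 2`; for
`|x| > 1` the integrand is at most `e^{-b x} ≤ e^{-R x} + e^{-R' x}`. So the real part of the
integrand at `u` is at most half of the one at `t` plus a `ν`-integrable majorant independent of
`u`, which gives the claim with `C₂ = 1 / 2`.
-/

open MeasureTheory Set

lemma Complex.norm_exp_sub_one_sub_id_le_mul_exp (z : ℂ) :
    ‖Complex.exp z - 1 - z‖ ≤ ‖z‖ ^ 2 * Real.exp ‖z‖ := by
  simpa [Finset.sum_range_succ, sub_sub] using Complex.norm_exp_sub_sum_le_norm_mul_exp z 2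

lemma Real.exp_sub_one_sub_id_le_mul_exp (y : ℝ) :
    Real.exp y - 1 - y ≤ y ^ 2 * Real.exp |y| := by
  have h := Complex.norm_exp_sub_one_sub_id_le_mul_exp y
  rw [← Complex.ofReal_exp, ← Complex.ofReal_one, ← Complex.ofReal_sub, ← Complex.ofReal_sub,
    Complex.norm_real, Complex.norm_real, Real.norm_eq_abs, Real.norm_eq_abs, sq_abs] at h
  exact (le_abs_self _).trans h

lemma exp_mul_sub_one_sub_le {y c : ℝ} (hc : c ∈ Icc (-1) 1) :
    Real.exp y * c - 1 - y ≤ (c - 1) / 2 + y ^ 2 * (Real.exp |y| + 1) := by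
  obtain ⟨hc₁, hc₂⟩ := hc
  have hconv : 0 ≤ Real.exp y - 1 - y := by linarith [Real.add_one_le_exp y]
  have hquad := Real.exp_sub_one_sub_id_le_mul_exp y
  -- AM-GM, then `(1 - c)² / 4 ≤ (1 - c) / 2` as `0 ≤ 1 - c ≤ 2`
  have hamgm : -y * (1 - c) ≤ y ^ 2 + (1 - c) / 2 := by
    nlinarith [sq_nonneg (y + (1 - c) / 2)]
  calc Real.exp y * c - 1 - y = (Real.exp y - 1 - y) * c + -y * (1 - c) + (c - 1) := by ring
    _ ≤ (Real.exp y - 1 - y) + (y ^ 2 + (1 - c) / 2) + (c - 1) := by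
      gcongr
      exact mul_le_of_le_one_right hconv hc₂
    _ ≤ _ := by linarith

lemma exp_neg_mul_le_add_of_mem_Icc {R R' b : ℝ} (hb : b ∈ Icc R R') (x : ℝ) :
    Real.exp (-b * x) ≤ Real.exp (-R * x) + Real.exp (-R' * x) := by
  rcases le_total 0 x with hx | hx
  · have : Real.exp (-b * x) ≤ Real.exp (-R * x) := by gcongr; exact hb.1
    linarith [Real.exp_pos (-R' * x)]
  · have : Real.exp (-b * x) ≤ Real.exp (-R' * x) := Real.exp_le_exp.2 (by nlinarith [hb.2])
    linarith [Real.exp_pos (-R * x)]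

noncomputable def levyIntegrand (u : ℂ) (x : ℝ) : ℂ :=
  Complex.exp (Complex.I * u * x) - 1 - if |x| ≤ 1 then Complex.I * u * x else 0

lemma measurable_levyIntegrand (u : ℂ) : Measurable (levyIntegrand u) := by
  unfold levyIntegrand
  refine Measurable.sub (by fun_prop) (Measurable.ite ?_ (by fun_prop) measurable_const)
  exact measurableSet_le measurable_abs measurable_const

lemma levyIntegrand_re (u : ℂ) (x : ℝ) : (levyIntegrand u x).re =
    Real.exp (-u.im * x) * Real.cos (u.re * x) - 1 - if |x| ≤ 1 then -u.im * x else 0 := by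
  simp only [levyIntegrand, Complex.sub_re, Complex.exp_re, apply_ite Complex.re]
  split_ifs <;> simp

lemma levyIntegrand_ofReal_re (t x : ℝ) : (levyIntegrand t x).re = Real.cos (t * x) - 1 := by
  simp [levyIntegrand_re]

lemma norm_levyIntegrand_le_of_abs_le_one (u : ℂ) {x : ℝ} (hx : |x| ≤ 1) :
    ‖levyIntegrand u x‖ ≤ ‖u‖ ^ 2 * Real.exp ‖u‖ * x ^ 2 := by
  have hz : ‖Complex.I * u * x‖ = ‖u‖ * |x| := by simp
  have hzu : ‖u‖ * |x| ≤ ‖u‖ := mul_le_of_le_one_right (norm_nonneg u) hx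
  rw [levyIntegrand, if_pos hx]
  calc _ ≤ ‖Complex.I * u * x‖ ^ 2 * Real.exp ‖Complex.I * u * x‖ :=
        Complex.norm_exp_sub_one_sub_id_le_mul_exp _
    _ ≤ (‖u‖ * |x|) ^ 2 * Real.exp ‖u‖ := by rw [hz]; gcongr
    _ = _ := by rw [mul_pow, sq_abs]; ring

lemma norm_levyIntegrand_le_of_one_lt_abs (u : ℂ) {x : ℝ} (hx : 1 < |x|) :
    ‖levyIntegrand u x‖ ≤ Real.exp (-u.im * x) + 1 := by
  rw [levyIntegrand, if_neg hx.not_ge, sub_zero]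
  refine (norm_sub_le _ _).trans_eq ?_
  simp [Complex.norm_exp]

noncomputable def levyMajorant (K : ℝ) (f : ℝ → ℝ) (x : ℝ) : ℝ :=
  K * min (x ^ 2) 1 + {x : ℝ | 1 < |x|}.indicator f x

section levyMajorant

variable {K : ℝ} {f : ℝ → ℝ} {x : ℝ}

lemma levyMajorant_of_abs_le_one (hx : |x| ≤ 1) : levyMajorant K f x = K * x ^ 2 := by
  have hx' : x ^ 2 ≤ 1 := (sq_le_one_iff_abs_le_one x).2 hx
  simp [levyMajorant, hx, hx', Set.indicator_of_notMem]

lemma levyMajorant_of_one_lt_abs (hx : 1 < |x|) : levyMajorant K f x = K + f x := by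
  have hx' : 1 ≤ x ^ 2 := ((one_lt_sq_iff_one_lt_abs x).2 hx).le
  simp [levyMajorant, hx, hx']

lemma integrable_levyMajorant {ν : Measure ℝ} (hν : Integrable (fun x => min (x ^ 2) 1) ν)
    (hf : IntegrableOn f {x | 1 < |x|} ν) (K : ℝ) : Integrable (levyMajorant K f) ν :=
  (hν.const_mul K).add
    ((integrable_indicator_iff (measurableSet_lt measurable_const measurable_abs)).2 hf)

end levyMajorant

lemma integrable_levyIntegrand {ν : Measure ℝ} (hν : Integrable (fun x => min (x ^ 2) 1) ν)
    {u : ℂ} (hu : IntegrableOn (fun x => Real.exp (-u.im * x)) {x | 1 < |x|} ν) :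
    Integrable (levyIntegrand u) ν := by
  refine (integrable_levyMajorant hν hu (‖u‖ ^ 2 * Real.exp ‖u‖ + 1)).mono'
    (measurable_levyIntegrand u).aestronglyMeasurable (ae_of_all _ fun x => ?_)
  rcases le_or_gt |x| 1 with hx | hx
  · rw [levyMajorant_of_abs_le_one hx]
    nlinarith [norm_levyIntegrand_le_of_abs_le_one u hx, sq_nonneg x]
  · rw [levyMajorant_of_one_lt_abs hx]
    nlinarith [norm_levyIntegrand_le_of_one_lt_abs u hx, sq_nonneg ‖u‖, Real.exp_pos ‖u‖]

lemma integrableOn_one_of_integrable_min_sq {ν : Measure ℝ}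
    (hν : Integrable (fun x => min (x ^ 2) 1) ν) :
    IntegrableOn (fun _ => (1 : ℝ)) {x | 1 < |x|} ν :=
  hν.integrableOn.congr_fun (fun x hx => min_eq_right ((one_lt_sq_iff_one_lt_abs x).2 hx).le)
    (measurableSet_lt measurable_const measurable_abs)

lemma levyIntegrand_re_le {M : ℝ} {f : ℝ → ℝ} {u : ℂ} (hM : |u.im| ≤ M) {x : ℝ}
    (hf : Real.exp (-u.im * x) ≤ f x) :
    (levyIntegrand u x).re ≤
      (levyIntegrand u.re x).re / 2 + levyMajorant (M ^ 2 * (Real.exp M + 1) + 1) f x := by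
  have hcos : Real.cos (u.re * x) ∈ Icc (-1) 1 := ⟨Real.neg_one_le_cos _, Real.cos_le_one _⟩
  have hK : 0 ≤ M ^ 2 * (Real.exp M + 1) := by positivity
  rw [levyIntegrand_re, levyIntegrand_ofReal_re]
  rcases le_or_gt |x| 1 with hx | hx
  · have hy : |-u.im * x| ≤ M := by
      rw [abs_mul, abs_neg]
      exact (mul_le_mul hM hx (abs_nonneg x) ((abs_nonneg _).trans hM)).trans_eq (mul_one M)
    have hy2 : (-u.im * x) ^ 2 ≤ M ^ 2 * x ^ 2 := by
      rw [mul_pow, neg_sq]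
      exact mul_le_mul_of_nonneg_right (sq_le_sq' (abs_le.1 hM).1 (abs_le.1 hM).2) (sq_nonneg x)
    rw [if_pos hx, levyMajorant_of_abs_le_one hx]
    calc _ ≤ (Real.cos (u.re * x) - 1) / 2 + (-u.im * x) ^ 2 * (Real.exp |-u.im * x| + 1) :=
          exp_mul_sub_one_sub_le hcos
      _ ≤ (Real.cos (u.re * x) - 1) / 2 + M ^ 2 * x ^ 2 * (Real.exp M + 1) := by gcongr
      _ ≤ _ := by nlinarith [sq_nonneg x]
  · rw [if_neg hx.not_ge, levyMajorant_of_one_lt_abs hx]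
    nlinarith [Real.exp_pos (-u.im * x), hcos.1, hcos.2]

noncomputable def levyExponent (a γ : ℝ) (ν : Measure ℝ) (u : ℂ) : ℂ :=
  -(a : ℂ) ^ 2 * u ^ 2 / 2 + Complex.I * γ * u + ∫ x, levyIntegrand u x ∂ν

lemma levyExponent_re {a γ : ℝ} {ν : Measure ℝ} {u : ℂ} (hu : Integrable (levyIntegrand u) ν) :
    (levyExponent a γ ν u).re =
      -a ^ 2 * (u.re ^ 2 - u.im ^ 2) / 2 - γ * u.im + ∫ x, (levyIntegrand u x).re ∂ν := by
  have hre := integral_re hu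
  simp only [RCLike.re_to_complex] at hre
  rw [levyExponent, Complex.add_re, ← hre]
  simp only [sq, neg_mul, Complex.add_re, Complex.div_ofNat_re, Complex.neg_re, Complex.mul_re,
    Complex.ofReal_re, Complex.ofReal_im, mul_zero, sub_zero, Complex.mul_im, zero_mul, add_zero,
    Complex.I_re, Complex.I_im, sub_self, one_mul, zero_add, zero_sub, add_left_inj]
  ring

theorem levyExponent_re_le {a γ M : ℝ} {ν : Measure ℝ} {f : ℝ → ℝ}
    (hν : Integrable (fun x => min (x ^ 2) 1) ν) (hf : IntegrableOn f {x | 1 < |x|} ν)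
    {u : ℂ} (hM : |u.im| ≤ M) (hfu : ∀ x, Real.exp (-u.im * x) ≤ f x) :
    (levyExponent a γ ν u).re ≤
      (a ^ 2 * M ^ 2 / 2 + |γ| * M + ∫ x, levyMajorant (M ^ 2 * (Real.exp M + 1) + 1) f x ∂ν) +
        1 / 2 * (levyExponent a γ ν u.re).re := by
  have hint_u : Integrable (levyIntegrand u) ν :=
    integrable_levyIntegrand hν (hf.mono' (by fun_prop) (ae_of_all _ fun x => by
      rw [Real.norm_of_nonneg (Real.exp_pos _).le]; exact hfu x))
  have hint_t : Integrable (levyIntegrand u.re) ν :=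
    integrable_levyIntegrand hν (by simpa using integrableOn_one_of_integrable_min_sq hν)
  have hre_u : Integrable (fun x => (levyIntegrand u x).re) ν := hint_u.re
  have hre_t : Integrable (fun x => (levyIntegrand u.re x).re / 2) ν := hint_t.re.div_const 2
  have hjumps : ∫ x, (levyIntegrand u x).re ∂ν ≤
      (∫ x, (levyIntegrand u.re x).re ∂ν) / 2 +
        ∫ x, levyMajorant (M ^ 2 * (Real.exp M + 1) + 1) f x ∂ν := by
    have hmaj := integrable_levyMajorant hν hf (M ^ 2 * (Real.exp M + 1) + 1)
    calc _ ≤ ∫ x, ((levyIntegrand u.re x).re / 2 +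
            levyMajorant (M ^ 2 * (Real.exp M + 1) + 1) f x) ∂ν :=
          integral_mono hre_u (hre_t.add hmaj)
            fun x => levyIntegrand_re_le hM (hfu x)
      _ = _ := by rw [integral_add hre_t hmaj, integral_div]
  have hdiffusion : -a ^ 2 * (u.re ^ 2 - u.im ^ 2) / 2 - γ * u.im ≤
      a ^ 2 * M ^ 2 / 2 + |γ| * M + (-a ^ 2 * u.re ^ 2 / 2) / 2 := by
    have h1 : u.im ^ 2 ≤ M ^ 2 := sq_le_sq' (abs_le.1 hM).1 (abs_le.1 hM).2
    have h2 : -(γ * u.im) ≤ |γ| * M :=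
      (neg_le_abs _).trans ((abs_mul γ u.im).trans_le (by gcongr))
    nlinarith [mul_nonneg (sq_nonneg a) (sq_nonneg u.re), mul_le_mul_of_nonneg_left h1 (sq_nonneg a)]
  rw [levyExponent_re hint_u, levyExponent_re hint_t]
  simp only [Complex.ofReal_re, Complex.ofReal_im]
  linarith

theorem stmt10_general (a γ R R' : ℝ) (ν : Measure ℝ)
    (hνint : Integrable (fun x => min (x ^ 2) 1) ν)
    (hνexp : Integrable (fun x => Real.exp (-R * x) + Real.exp (-R' * x))
      (ν.restrict {x : ℝ | 1 < |x|}))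
    (ψ : ℂ → ℂ)
    (hψ : ∀ u : ℂ, u.im ∈ Set.Icc R R' → ψ u =
      -(a:ℂ) ^ 2 * u ^ 2 / 2 + Complex.I * γ * u +
        ∫ x : ℝ, (Complex.exp (Complex.I * u * x) - 1 -
          (if |x| ≤ 1 then Complex.I * u * x else 0)) ∂ν)
    (hψreal : ∀ t : ℝ, ψ t =
      -(a:ℂ) ^ 2 * (t:ℂ) ^ 2 / 2 + Complex.I * γ * t +
        ∫ x : ℝ, (Complex.exp (Complex.I * t * x) - 1 -
          (if |x| ≤ 1 then Complex.I * t * x else 0)) ∂ν) :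
    ∃ C₁ : ℝ, ∃ C₂ > (0:ℝ), ∀ u : ℂ, u.im ∈ Set.Icc R R' →
      (ψ u).re ≤ C₁ + C₂ * (ψ (u.re : ℂ)).re := by
  set M := max |R| |R'|
  refine ⟨a ^ 2 * M ^ 2 / 2 + |γ| * M + ∫ x, levyMajorant (M ^ 2 * (Real.exp M + 1) + 1)
    (fun x => Real.exp (-R * x) + Real.exp (-R' * x)) x ∂ν, 1 / 2, by norm_num, fun u hu => ?_⟩
  rw [hψ u hu, hψreal u.re]
  exact levyExponent_re_le hνint hνexp (abs_le_max_abs_abs hu.1 hu.2)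
    (exp_neg_mul_le_add_of_mem_Icc hu)

/-- Corollary A.5 of the paper: on the strip `Im u ∈ [R,R']`,
`Re ψ(u) ≤ C₁ + C₂ Re ψ(Re u)`. -/
theorem stmt10 (a γ R R' : ℝ) (hRR : R ≤ R') (ν : Measure ℝ) (hν0 : ν {0} = 0)
    (hνint : Integrable (fun x => min (x ^ 2) 1) ν)
    (hνexp : Integrable (fun x => Real.exp (-R * x) + Real.exp (-R' * x))
      (ν.restrict {x : ℝ | 1 < |x|}))
    (ψ : ℂ → ℂ)
    (hψ : ∀ u : ℂ, u.im ∈ Set.Icc R R' → ψ u =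
      -(a:ℂ) ^ 2 * u ^ 2 / 2 + Complex.I * γ * u +
        ∫ x : ℝ, (Complex.exp (Complex.I * u * x) - 1 -
          (if |x| ≤ 1 then Complex.I * u * x else 0)) ∂ν)
    (hψreal : ∀ t : ℝ, ψ t =
      -(a:ℂ) ^ 2 * (t:ℂ) ^ 2 / 2 + Complex.I * γ * t +
        ∫ x : ℝ, (Complex.exp (Complex.I * t * x) - 1 -
          (if |x| ≤ 1 then Complex.I * t * x else 0)) ∂ν) :
    ∃ C₁ : ℝ, ∃ C₂ > (0:ℝ), ∀ u : ℂ, u.im ∈ Set.Icc R R' →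
      (ψ u).re ≤ C₁ + C₂ * (ψ (u.re : ℂ)).re :=
  stmt10_general a γ R R' ν hνint hνexp ψ hψ hψreal
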